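/- Lower bound for the second-level functional φ: for any L-periodic mean-zero H² function w with |w|_{L²} ≤ R₀ and |w'|_{L²} ≤ R₁, one has |w''|² ≤ φ(w) + (45/64) R₀³ R₁, where φ(w) = ∫ ((9/5)w''² − 3 w w'² + w⁴/4). -/

import Mathlib

/-!
Since `w` has mean zero it vanishes somewhere, so by periodicity every `w x ^ 2` is bounded by
`∫ |w w'| ≤ |w| |w'|` (Agmon), whence `∫ w⁴ ≤ R₀³ R₁`. Integrating by parts,
`3 ∫ w w'² = -(3/2) ∫ w² w''`, and the pointwise Young inequality
`-(3/2) a² b ≤ (4/5) b² + (45/64) a⁴` bounds this by `(4/5) |w''|² + (45/64) ∫ w⁴`,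
so that `φ(w) ≥ |w''|² - (29/64) ∫ w⁴`.
-/

open Real intervalIntegral

theorem Function.Periodic.deriv {𝕜 F : Type*} [NontriviallyNormedField 𝕜] [NormedAddCommGroup F]
    [NormedSpace 𝕜 F] {f : 𝕜 → F} {c : 𝕜} (hf : Function.Periodic f c) :
    Function.Periodic (deriv f) c := fun x ↦ by
  rw [← deriv_comp_add_const, funext hf]

open MeasureTheory in
theorem intervalIntegral.integral_abs_mul_le_sqrt_mul_sqrt {a b : ℝ} (hab : a ≤ b) {f g : ℝ → ℝ}
    (hf : Continuous f) (hg : Continuous g) :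
    ∫ x in a..b, |f x * g x| ≤ √(∫ x in a..b, f x ^ 2) * √(∫ x in a..b, g x ^ 2) := by
  have memLp_two {h : ℝ → ℝ} (hh : Continuous h) :
      MemLp (fun x ↦ |h x|) (ENNReal.ofReal 2) (volume.restrict (Set.Ioc a b)) := by
    rw [ENNReal.ofReal_ofNat, memLp_two_iff_integrable_sq hh.abs.aestronglyMeasurable]
    simp only [sq_abs]
    exact ((hh.pow 2).intervalIntegrable a b).1
  have holder := integral_mul_le_Lp_mul_Lq_of_nonneg Real.HolderConjugate.two_two
    (.of_forall fun x ↦ abs_nonneg (f x)) (.of_forall fun x ↦ abs_nonneg (g x))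
    (memLp_two hf) (memLp_two hg)
  simp only [integral_of_le hab, abs_mul, sqrt_eq_rpow]
  simpa only [Real.rpow_two, sq_abs, one_div] using holder

theorem exists_eq_zero_of_intervalIntegral_eq_zero {f : ℝ → ℝ} {a b : ℝ} (hab : a < b)
    (hf : ContinuousOn f (Set.Icc a b)) (h : ∫ x in a..b, f x = 0) :
    ∃ c ∈ Set.Icc a b, f c = 0 := by
  by_contra! hne
  have hsign : ∀ x ∈ Set.Ioo a b, 0 < f a * f x := by
    intro x hx
    by_contra! hle
    have hfa := hne a (Set.left_mem_Icc.2 hab.le)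
    have hzero : (0 : ℝ) ∈ Set.uIcc (f a) (f x) := by
      rcases hfa.lt_or_gt with hfa | hfa
      · exact Set.mem_uIcc.2 (Or.inl ⟨hfa.le, by nlinarith⟩)
      · exact Set.mem_uIcc.2 (Or.inr ⟨by nlinarith, hfa.le⟩)
    have hsub : Set.uIcc a x ⊆ Set.Icc a b := by
      rw [Set.uIcc_of_le hx.1.le]; exact Set.Icc_subset_Icc_right hx.2.le
    obtain ⟨c, hc, hfc⟩ := intermediate_value_uIcc (hf.mono hsub) hzero
    exact hne c (hsub hc) hfc
  have hint : IntervalIntegrable (fun x ↦ f a * f x) MeasureTheory.volume a b :=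
    (continuousOn_const.mul hf).intervalIntegrable_of_Icc hab.le
  have hpos := intervalIntegral_pos_of_pos_on hint hsign hab
  rw [integral_const_mul, h, mul_zero] at hpos
  exact hpos.false

theorem sq_le_integral_abs_mul_deriv_of_eq_zero {f : ℝ → ℝ} (hf : ContDiff ℝ 1 f) {c d x : ℝ}
    (hc : f c = 0) (hd : f d = 0) (hx : x ∈ Set.Icc c d) :
    f x ^ 2 ≤ ∫ t in c..d, |f t * deriv f t| := by
  obtain ⟨hdiff, hcont⟩ := contDiff_one_iff_deriv.1 hf
  have hprod : Continuous fun t ↦ f t * deriv f t := hdiff.continuous.mul hcont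
  have hint (u v : ℝ) := hprod.intervalIntegrable (μ := MeasureTheory.volume) u v
  have habs (u v : ℝ) := hprod.abs.intervalIntegrable (μ := MeasureTheory.volume) u v
  have ftc (u v : ℝ) : f v ^ 2 - f u ^ 2 = 2 * ∫ t in u..v, f t * deriv f t := by
    rw [← integral_const_mul]
    refine (integral_eq_sub_of_hasDerivAt (f := fun t ↦ f t ^ 2) (fun t _ ↦ ?_)
      ((hint u v).const_mul 2)).symm
    exact ((hdiff t).hasDerivAt.fun_pow 2).congr_deriv (by push_cast; ring)
  have left : ∫ t in c..x, f t * deriv f t ≤ ∫ t in c..x, |f t * deriv f t| :=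
    integral_mono_on hx.1 (hint c x) (habs c x) fun t _ ↦ le_abs_self _
  have right : -∫ t in x..d, f t * deriv f t ≤ ∫ t in x..d, |f t * deriv f t| := by
    rw [← integral_neg]
    exact integral_mono_on hx.2 (hint x d).neg (habs x d) fun t _ ↦ neg_le_abs _
  have hsplit := integral_add_adjacent_intervals (habs c x) (habs x d)
  have hcx := ftc c x
  have hxd := ftc x d
  rw [hc] at hcx
  rw [hd] at hxd
  linarith

theorem sq_le_integral_abs_mul_deriv_of_periodic {f : ℝ → ℝ} {L : ℝ} (hL : 0 < L)
    (hper : Function.Periodic f L) (hf : ContDiff ℝ 1 f) {z : ℝ} (hz : f z = 0) (x : ℝ) :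
    f x ^ 2 ≤ ∫ t in (0 : ℝ)..L, |f t * deriv f t| := by
  obtain ⟨m, ⟨hlo, hhi⟩, -⟩ := existsUnique_sub_zsmul_mem_Ico hL x z
  have hc : f (z + m • L) = 0 := by rw [(hper.zsmul m) z, hz]
  have hperabs : Function.Periodic (fun t ↦ |f t * deriv f t|) L := fun t ↦ by
    simp only [hper t, hper.deriv t]
  calc f x ^ 2 ≤ ∫ t in (z + m • L)..(z + m • L + L), |f t * deriv f t| :=
        sq_le_integral_abs_mul_deriv_of_eq_zero hf hc (by rw [hper]; exact hc)
          ⟨by linarith, by linarith⟩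
    _ = ∫ t in (0 : ℝ)..L, |f t * deriv f t| := by
        rw [hperabs.intervalIntegral_add_eq _ 0, zero_add]

theorem sq_le_sqrt_integral_mul_sqrt_integral_of_periodic {f : ℝ → ℝ} {L : ℝ} (hL : 0 < L)
    (hper : Function.Periodic f L) (hf : ContDiff ℝ 1 f) (hmean : ∫ x in (0 : ℝ)..L, f x = 0)
    (x : ℝ) :
    f x ^ 2 ≤ √(∫ t in (0 : ℝ)..L, f t ^ 2) * √(∫ t in (0 : ℝ)..L, deriv f t ^ 2) := by
  obtain ⟨z, -, hz⟩ :=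
    exists_eq_zero_of_intervalIntegral_eq_zero hL hf.continuous.continuousOn hmean
  exact (sq_le_integral_abs_mul_deriv_of_periodic hL hper hf hz x).trans
    (integral_abs_mul_le_sqrt_mul_sqrt hL.le hf.continuous (hf.continuous_deriv le_rfl))

theorem integral_pow_four_le_of_periodic {f : ℝ → ℝ} {L : ℝ} (hL : 0 < L)
    (hper : Function.Periodic f L) (hf : ContDiff ℝ 1 f) (hmean : ∫ x in (0 : ℝ)..L, f x = 0) :
    ∫ x in (0 : ℝ)..L, f x ^ 4
      ≤ √(∫ x in (0 : ℝ)..L, f x ^ 2) ^ 3 * √(∫ x in (0 : ℝ)..L, deriv f x ^ 2) := by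
  set A := ∫ x in (0 : ℝ)..L, f x ^ 2
  set M := √A * √(∫ x in (0 : ℝ)..L, deriv f x ^ 2)
  have hsup := sq_le_sqrt_integral_mul_sqrt_integral_of_periodic hL hper hf hmean
  have hA : 0 ≤ A := integral_nonneg hL.le fun x _ ↦ sq_nonneg (f x)
  calc ∫ x in (0 : ℝ)..L, f x ^ 4 ≤ ∫ x in (0 : ℝ)..L, M * f x ^ 2 := by
        refine integral_mono_on hL.le ((hf.continuous.pow 4).intervalIntegrable _ _)
          ((continuous_const.mul (hf.continuous.pow 2)).intervalIntegrable _ _) fun x _ ↦ ?_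
        rw [show f x ^ 4 = f x ^ 2 * f x ^ 2 by ring]
        exact mul_le_mul_of_nonneg_right (hsup x) (sq_nonneg _)
    _ = √A ^ 3 * √(∫ x in (0 : ℝ)..L, deriv f x ^ 2) := by
        rw [integral_const_mul]
        change M * A = _
        conv_lhs => rw [← sq_sqrt hA]
        ring

theorem integral_mul_deriv_eq_neg_of_periodic {u v : ℝ → ℝ} {L : ℝ} (hu : ContDiff ℝ 1 u)
    (hv : ContDiff ℝ 1 v) (hup : Function.Periodic u L) (hvp : Function.Periodic v L) :
    ∫ x in (0 : ℝ)..L, u x * deriv v x = -∫ x in (0 : ℝ)..L, deriv u x * v x := by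
  rw [integral_mul_deriv_eq_deriv_mul (fun x _ ↦ (hu.differentiable one_ne_zero x).hasDerivAt)
    (fun x _ ↦ (hv.differentiable one_ne_zero x).hasDerivAt)
    ((hu.continuous_deriv le_rfl).intervalIntegrable _ _)
    ((hv.continuous_deriv le_rfl).intervalIntegrable _ _)]
  simp only [hup.eq, hvp.eq, sub_self, zero_sub]

theorem three_mul_integral_mul_deriv_sq_le_of_periodic {w : ℝ → ℝ} {L : ℝ} (hL : 0 ≤ L)
    (hw : ContDiff ℝ 2 w) (hper : Function.Periodic w L) :
    3 * ∫ x in (0 : ℝ)..L, w x * deriv w x ^ 2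
      ≤ 4 / 5 * (∫ x in (0 : ℝ)..L, deriv (deriv w) x ^ 2)
        + 45 / 64 * ∫ x in (0 : ℝ)..L, w x ^ 4 := by
  have hw1 : ContDiff ℝ 1 w := hw.of_le (by norm_num)
  have hw' : ContDiff ℝ 1 (deriv w) := hw.deriv'
  have cw := hw1.continuous
  have cw'' := hw'.continuous_deriv le_rfl
  have hibp := integral_mul_deriv_eq_neg_of_periodic (hw1.pow 2) hw'
    (fun x ↦ by simp only [hper x]) hper.deriv
  have hderiv (x : ℝ) : deriv (fun x ↦ w x ^ 2) x * deriv w x = 2 * (w x * deriv w x ^ 2) := by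
    rw [deriv_fun_pow (hw1.differentiable one_ne_zero x)]
    ring
  simp only [hderiv, integral_const_mul] at hibp
  calc 3 * ∫ x in (0 : ℝ)..L, w x * deriv w x ^ 2
      = ∫ x in (0 : ℝ)..L, -(3 / 2) * (w x ^ 2 * deriv (deriv w) x) := by
        rw [integral_const_mul, hibp]
        ring
    _ ≤ ∫ x in (0 : ℝ)..L, (4 / 5 * deriv (deriv w) x ^ 2 + 45 / 64 * w x ^ 4) := by
        refine integral_mono_on hL ?_ ?_ fun x _ ↦ ?_
        · exact Continuous.intervalIntegrable (by fun_prop) _ _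
        · exact Continuous.intervalIntegrable (by fun_prop) _ _
        · nlinarith [sq_nonneg (deriv (deriv w) x + 15 / 16 * w x ^ 2)]
    _ = _ := by
        rw [integral_add (Continuous.intervalIntegrable (by fun_prop) _ _)
          (Continuous.intervalIntegrable (by fun_prop) _ _),
          integral_const_mul, integral_const_mul]

theorem stmt9 (L R₀ R₁ : ℝ) (hL : 0 < L) (w : ℝ → ℝ) (hw : ContDiff ℝ 2 w)
    (hper : Function.Periodic w L) (hmean : ∫ x in (0:ℝ)..L, w x = 0)
    (hR0 : Real.sqrt (∫ x in (0:ℝ)..L, (w x) ^ 2) ≤ R₀)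
    (hR1 : Real.sqrt (∫ x in (0:ℝ)..L, (deriv w x) ^ 2) ≤ R₁) :
    ∫ x in (0:ℝ)..L, (deriv^[2] w x) ^ 2
      ≤ (∫ x in (0:ℝ)..L,
           ((9/5) * (deriv^[2] w x) ^ 2 - 3 * w x * (deriv w x) ^ 2 + (w x) ^ 4 / 4))
        + (45/64) * R₀ ^ 3 * R₁ := by
  have hw1 : ContDiff ℝ 1 w := hw.of_le (by norm_num)
  have cw := hw1.continuous
  have cw' := hw1.continuous_deriv le_rfl
  have cw'' := (hw.deriv' : ContDiff ℝ 1 (deriv w)).continuous_deriv le_rfl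
  have hR₀ : 0 ≤ R₀ := (sqrt_nonneg _).trans hR0
  have hR₁ : 0 ≤ R₁ := (sqrt_nonneg _).trans hR1
  have hquartic : ∫ x in (0:ℝ)..L, w x ^ 4 ≤ R₀ ^ 3 * R₁ :=
    (integral_pow_four_le_of_periodic hL hper hw1 hmean).trans <|
      mul_le_mul (pow_le_pow_left₀ (sqrt_nonneg _) hR0 3) hR1 (sqrt_nonneg _) (by positivity)
  have hφ : ∫ x in (0:ℝ)..L,
        ((9/5) * deriv (deriv w) x ^ 2 - 3 * w x * deriv w x ^ 2 + w x ^ 4 / 4)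
      = 9/5 * (∫ x in (0:ℝ)..L, deriv (deriv w) x ^ 2)
        - 3 * (∫ x in (0:ℝ)..L, w x * deriv w x ^ 2) + (∫ x in (0:ℝ)..L, w x ^ 4) / 4 := by
    simp only [mul_assoc (3 : ℝ)]
    rw [integral_add (Continuous.intervalIntegrable (by fun_prop) _ _)
        (Continuous.intervalIntegrable (by fun_prop) _ _),
      integral_sub (Continuous.intervalIntegrable (by fun_prop) _ _)
        (Continuous.intervalIntegrable (by fun_prop) _ _),
      integral_const_mul, integral_const_mul, integral_div]
  rw [show deriv^[2] w = deriv (deriv w) from rfl, hφ]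
  have hkey := three_mul_integral_mul_deriv_sq_le_of_periodic hL.le hw hper
  have hR : 0 ≤ R₀ ^ 3 * R₁ := mul_nonneg (pow_nonneg hR₀ 3) hR₁
  linarith
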